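/- arXiv:2011.09660 — 2 statements merged into one kernel-verified Lean document; each statement's English description precedes it below -/
import Mathlib

section
/- Higher-order du Bois–Reymond lemma (classical smooth version): Let a < b be real numbers, m ∈ ℕ_{>0}, and f : [a,b] → ℝ continuous. If ∫_a^b f(t)·h^{(m)}(t) dt = 0 for every smooth h : [a,b] → ℝ satisfying h^{(i)}(a) = h^{(i)}(b) = 0 for all i = 0,…,m−1, then f is a polynomial of degree at most m−1. -/
open intervalIntegral

noncomputable def prim (a : ℝ) (χ : ℝ → ℝ) : ℝ → ℝ := fun t => ∫ s in a..t, χ s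

lemma prim_hasDerivAt (a : ℝ) {χ : ℝ → ℝ} (hχ : Continuous χ) (t : ℝ) :
    HasDerivAt (prim a χ) (χ t) t :=
  integral_hasDerivAt_right (hχ.intervalIntegrable a t)
    (hχ.stronglyMeasurableAtFilter _ _) hχ.continuousAt

lemma deriv_prim (a : ℝ) {χ : ℝ → ℝ} (hχ : Continuous χ) :
    deriv (prim a χ) = χ := funext fun t => (prim_hasDerivAt a hχ t).deriv

lemma prim_continuous (a : ℝ) {χ : ℝ → ℝ} (hχ : Continuous χ) :
    Continuous (prim a χ) := by
  have : Differentiable ℝ (prim a χ) := fun t => (prim_hasDerivAt a hχ t).differentiableAt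
  exact this.continuous

lemma iter_prim_continuous (a : ℝ) {χ : ℝ → ℝ} (hχ : Continuous χ) (k : ℕ) :
    Continuous ((prim a)^[k] χ) := by
  induction k with
  | zero => exact hχ
  | succ k ih => rw [Function.iterate_succ_apply']; exact prim_continuous a ih

lemma prim_at_self (a : ℝ) (χ : ℝ → ℝ) : prim a χ a = 0 := integral_same

lemma iter_prim_at_self (a : ℝ) (χ : ℝ → ℝ) (k : ℕ) : (prim a)^[k+1] χ a = 0 := by
  rw [Function.iterate_succ_apply']; exact prim_at_self a _

lemma iteratedDeriv_iter_prim (a : ℝ) {χ : ℝ → ℝ} (hχ : Continuous χ) (i : ℕ) :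
    ∀ j, iteratedDeriv i ((prim a)^[i + j] χ) = (prim a)^[j] χ := by
  induction i with
  | zero => intro j; simp [iteratedDeriv_zero]
  | succ i ih =>
    intro j
    rw [iteratedDeriv_succ']
    have h1 : (prim a)^[i + 1 + j] χ = prim a ((prim a)^[i + j] χ) := by
      rw [show i + 1 + j = (i + j) + 1 by ring, Function.iterate_succ_apply']
    rw [h1, deriv_prim a (iter_prim_continuous a hχ (i + j)), ih j]

lemma exists_antideriv (P : Polynomial ℝ) : ∃ Q : Polynomial ℝ, Q.derivative = P := by
  induction P using Polynomial.induction_on' with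
  | add p q hp hq =>
    obtain ⟨Qp, hQp⟩ := hp; obtain ⟨Qq, hQq⟩ := hq
    exact ⟨Qp + Qq, by rw [Polynomial.derivative_add, hQp, hQq]⟩
  | monomial n r =>
    refine ⟨Polynomial.C (r / (n + 1)) * Polynomial.X ^ (n + 1), ?_⟩
    rw [Polynomial.derivative_C_mul, Polynomial.derivative_X_pow, Nat.add_sub_cancel,
      ← mul_assoc, ← Polynomial.C_mul]
    rw [← Polynomial.C_mul_X_pow_eq_monomial]
    congr 1
    have : ((n : ℝ) + 1) ≠ 0 := by positivity
    push_cast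
    field_simp

lemma prim_poly (a : ℝ) (P : Polynomial ℝ) :
    ∃ Q : Polynomial ℝ, prim a (fun t => P.eval t) = fun t => Q.eval t := by
  obtain ⟨Q₀, hQ₀⟩ := exists_antideriv P
  refine ⟨Q₀ - Polynomial.C (Q₀.eval a), ?_⟩
  funext t
  have : prim a (fun t => P.eval t) t = Q₀.eval t - Q₀.eval a := by
    apply intervalIntegral.integral_eq_sub_of_hasDerivAt
    · intro x _
      have := Q₀.hasDerivAt x
      rwa [hQ₀] at this
    · exact (P.continuous_aeval).intervalIntegrable a t
  simpa using this

lemma iter_prim_poly (a : ℝ) (P : Polynomial ℝ) (k : ℕ) :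
    ∃ Q : Polynomial ℝ, (prim a)^[k] (fun t => P.eval t) = fun t => Q.eval t := by
  induction k with
  | zero => exact ⟨P, rfl⟩
  | succ k ih =>
    obtain ⟨Q, hQ⟩ := ih
    rw [Function.iterate_succ_apply', hQ]
    exact prim_poly a Q

lemma iter_prim_cauchy (a b : ℝ) {χ : ℝ → ℝ} (hχ : Continuous χ) (k : ℕ) :
    (prim a)^[k+1] χ b = ∫ s in a..b, ((b - s) ^ k / (k.factorial : ℝ)) * χ s := by
  induction k generalizing χ with
  | zero =>
    simp only [Function.iterate_one, pow_zero, Nat.factorial_zero, Nat.cast_one, div_one, one_mul]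
    rfl
  | succ k ih =>
    have hpc : Continuous (prim a χ) := prim_continuous a hχ
    have h1 : (prim a)^[k+1+1] χ = (prim a)^[k+1] (prim a χ) := Function.iterate_succ_apply _ _ _
    rw [h1, ih hpc]
    have hcong : ∀ x ∈ Set.uIcc a b, ((b - x) ^ k / (k.factorial : ℝ)) * prim a χ x
        = prim a χ x * ((b - x) ^ k / (k.factorial : ℝ)) := fun x _ => mul_comm _ _
    rw [intervalIntegral.integral_congr hcong]
    have hv : ∀ x ∈ Set.uIcc a b, HasDerivAt
        (fun s => -((b - s) ^ (k+1) / ((k+1).factorial : ℝ))) ((b - x) ^ k / (k.factorial : ℝ)) x := by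
      intro x _
      have h2 : HasDerivAt (fun s : ℝ => b - s) (-1) x := (hasDerivAt_id x).const_sub b
      have h3 := (h2.pow (k+1)).div_const ((k+1).factorial : ℝ)
      have h4 := h3.neg
      refine HasDerivAt.congr_deriv h4 ?_
      have hfac : ((k+1).factorial : ℝ) = (k+1) * (k.factorial : ℝ) := by
        rw [Nat.factorial_succ]; push_cast; ring
      rw [hfac]
      simp only [Nat.add_sub_cancel, Nat.cast_add, Nat.cast_one]
      have hk : (k.factorial : ℝ) ≠ 0 := by positivity
      field_simp
    have hu : ∀ x ∈ Set.uIcc a b, HasDerivAt (prim a χ) (χ x) x :=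
      fun x _ => prim_hasDerivAt a hχ x
    have hibp := intervalIntegral.integral_mul_deriv_eq_deriv_mul hu hv
      (hχ.intervalIntegrable a b)
      (by apply Continuous.intervalIntegrable; continuity)
    rw [hibp, prim_at_self]
    simp only [sub_self, zero_pow (Nat.succ_ne_zero k), zero_div, neg_zero, mul_zero, zero_mul,
      sub_zero, zero_sub]
    rw [← intervalIntegral.integral_neg]
    apply intervalIntegral.integral_congr
    intro x _
    ring

lemma key_zero {a b : ℝ} (hab : a < b) {g : ℝ → ℝ} (hg : ContinuousOn g (Set.Icc a b))
    (hnn : ∀ t ∈ Set.Icc a b, 0 ≤ g t) (hI : ∫ s in a..b, g s = 0) :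
    ∀ t ∈ Set.Icc a b, g t = 0 := by
  by_contra hcon
  push_neg at hcon
  obtain ⟨t₀, ht₀, ht₀ne⟩ := hcon
  have hpos : 0 < g t₀ := lt_of_le_of_ne (hnn t₀ ht₀) (Ne.symm ht₀ne)
  have hcw : ContinuousWithinAt g (Set.Icc a b) t₀ := hg t₀ ht₀
  have hmem : Set.Ioi (g t₀ / 2) ∈ nhds (g t₀) := Ioi_mem_nhds (by linarith)
  have hev : g ⁻¹' Set.Ioi (g t₀ / 2) ∈ nhdsWithin t₀ (Set.Icc a b) := hcw hmem
  rw [mem_nhdsWithin] at hev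
  obtain ⟨U, hUopen, hUt₀, hUsub⟩ := hev
  obtain ⟨δ, hδpos, hball⟩ := Metric.isOpen_iff.mp hUopen t₀ hUt₀
  set c := max a (t₀ - δ/2) with hc
  set d := min b (t₀ + δ/2) with hd
  have hat₀ : a ≤ t₀ := ht₀.1
  have ht₀b : t₀ ≤ b := ht₀.2
  have hac : a ≤ c := le_max_left _ _
  have hdb : d ≤ b := min_le_left _ _
  have hcd : c < d := by
    rw [hc, hd]
    apply max_lt
    · exact lt_min hab (by linarith)
    · exact lt_min (by linarith) (by linarith)
  have hsubIcc : Set.Icc c d ⊆ Set.Icc a b := Set.Icc_subset_Icc hac hdb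
  have hsubU : Set.Icc c d ⊆ U := by
    intro t ht
    apply hball
    rw [Metric.mem_ball, Real.dist_eq, abs_lt]
    have h1 : t₀ - δ/2 ≤ c := le_max_right _ _
    have h2 : d ≤ t₀ + δ/2 := min_le_right _ _
    constructor <;> [linarith [ht.1]; linarith [ht.2]]
  have hglb : ∀ t ∈ Set.Icc c d, g t₀ / 2 ≤ g t := by
    intro t ht
    have : t ∈ U ∩ Set.Icc a b := ⟨hsubU ht, hsubIcc ht⟩
    exact le_of_lt (hUsub this)
  have hint1 : IntervalIntegrable g MeasureTheory.volume a c := by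
    apply ContinuousOn.intervalIntegrable
    rw [Set.uIcc_of_le hac]
    exact hg.mono (Set.Icc_subset_Icc le_rfl (by linarith))
  have hint2 : IntervalIntegrable g MeasureTheory.volume c d := by
    apply ContinuousOn.intervalIntegrable
    rw [Set.uIcc_of_le hcd.le]
    exact hg.mono hsubIcc
  have hint3 : IntervalIntegrable g MeasureTheory.volume d b := by
    apply ContinuousOn.intervalIntegrable
    rw [Set.uIcc_of_le hdb]
    exact hg.mono (Set.Icc_subset_Icc (by linarith) le_rfl)
  have hsplit : (∫ s in a..c, g s) + (∫ s in c..d, g s) + (∫ s in d..b, g s)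
      = ∫ s in a..b, g s := by
    rw [intervalIntegral.integral_add_adjacent_intervals hint1 hint2,
      intervalIntegral.integral_add_adjacent_intervals (hint1.trans hint2) hint3]
  have hI1 : 0 ≤ ∫ s in a..c, g s :=
    intervalIntegral.integral_nonneg hac (fun u hu => hnn u ⟨hu.1, by linarith [hu.2]⟩)
  have hI3 : 0 ≤ ∫ s in d..b, g s :=
    intervalIntegral.integral_nonneg hdb (fun u hu => hnn u ⟨by linarith [hu.1], hu.2⟩)
  have hI2 : g t₀ / 2 * (d - c) ≤ ∫ s in c..d, g s := by
    have := intervalIntegral.integral_mono_on hcd.le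
      (_root_.intervalIntegrable_const (c := g t₀ / 2)) hint2 hglb
    rwa [intervalIntegral.integral_const, smul_eq_mul, mul_comm] at this
  have : 0 < g t₀ / 2 * (d - c) := by
    apply mul_pos (by linarith) (by linarith)
  linarith [hsplit, hI, hI1, hI2, hI3]

lemma coeffs_eq_zero {m : ℕ} (b : ℝ) (c : Fin m → ℝ) {S : Set ℝ} (hS : S.Infinite)
    (h : ∀ s ∈ S, ∑ i : Fin m, c i * (b - s) ^ (i : ℕ) = 0) : c = 0 := by
  set Q : Polynomial ℝ := ∑ i : Fin m, Polynomial.C (c i) * (Polynomial.C b - Polynomial.X) ^ (i : ℕ)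
    with hQdef
  have hQeval : ∀ s, Q.eval s = ∑ i : Fin m, c i * (b - s) ^ (i : ℕ) := by
    intro s
    simp [hQdef, Polynomial.eval_finset_sum]
  have hQ0 : Q = 0 := by
    apply Polynomial.eq_zero_of_infinite_isRoot
    apply hS.mono
    intro s hs
    simp only [Set.mem_setOf_eq, Polynomial.IsRoot, hQeval]
    exact h s hs
  have hR : (∑ i : Fin m, Polynomial.C (c i) * Polynomial.X ^ (i : ℕ)) = 0 := by
    have := congrArg (fun p => p.comp (Polynomial.C b - Polynomial.X)) hQ0
    simp only [Polynomial.zero_comp] at this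
    rw [hQdef] at this
    rw [← this]
    rw [Polynomial.sum_comp]
    apply Finset.sum_congr rfl
    intro i _
    simp [Polynomial.mul_comp, Polynomial.pow_comp, Polynomial.sub_comp]
  funext j
  have hco := congrArg (fun p => Polynomial.coeff p (j : ℕ)) hR
  simp only [Polynomial.finset_sum_coeff, Polynomial.coeff_zero] at hco
  rw [Finset.sum_eq_single j] at hco
  · simpa [Polynomial.coeff_C_mul, Polynomial.coeff_X_pow] using hco
  · intro i _ hij
    simp only [Polynomial.coeff_C_mul, Polynomial.coeff_X_pow]
    rw [if_neg (fun hji => hij (Fin.ext hji.symm)), mul_zero]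
  · simp

/-- higher-order du Bois–Reymond lemma (classical smooth version).
If `∫_a^b f·h⁽ᵐ⁾ = 0` for every smooth `h` whose derivatives of order `< m` vanish at both
endpoints, then the continuous function `f` agrees on `[a,b]` with a polynomial of degree
at most `m - 1`. -/
theorem stmt_15 (a b : ℝ) (hab : a < b) (m : ℕ) (hm : 0 < m) (f : ℝ → ℝ)
    (hf : ContinuousOn f (Set.Icc a b))
    (hint : ∀ h : ℝ → ℝ, ContDiff ℝ (⊤ : ℕ∞) h →
      (∀ i < m, iteratedDeriv i h a = 0 ∧ iteratedDeriv i h b = 0) →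
      ∫ t in a..b, f t * iteratedDeriv m h t = 0) :
    ∃ p : Polynomial ℝ, p.degree < m ∧ ∀ t ∈ Set.Icc a b, f t = p.eval t := by
  have hab' : a ≤ b := hab.le
  have huIcc : Set.uIcc a b = Set.Icc a b := Set.uIcc_of_le hab'
  have hfint : ∀ (g : ℝ → ℝ), Continuous g →
      IntervalIntegrable (fun s => f s * g s) MeasureTheory.volume a b := by
    intro g hg
    apply ContinuousOn.intervalIntegrable
    rw [huIcc]
    exact hf.mul hg.continuousOn
  set e : Fin m → ℝ → ℝ := fun k s => (b - s) ^ (k : ℕ) with he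
  have hecont : ∀ k : Fin m, Continuous (e k) := by
    intro k; rw [he]; fun_prop
  set M : Matrix (Fin m) (Fin m) ℝ :=
    Matrix.of (fun k i => ∫ s in a..b, e k s * e i s) with hM
  have hMapp : ∀ (c : Fin m → ℝ) (k : Fin m),
      M.mulVec c k = ∑ i : Fin m, (∫ s in a..b, e k s * e i s) * c i := by
    intro c k
    simp [hM, Matrix.mulVec, dotProduct]
  -- Step A : the consequence of `hint` for polynomial test data
  have stepA : ∀ Ψ : Polynomial ℝ, (∀ k : Fin m, ∫ s in a..b, e k s * Ψ.eval s = 0) →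
      ∫ s in a..b, f s * Ψ.eval s = 0 := by
    intro Ψ hΨ
    set Ψe : ℝ → ℝ := fun t => Ψ.eval t with hΨe
    have hΨc : Continuous Ψe := by rw [hΨe]; exact Ψ.continuous
    set h : ℝ → ℝ := (prim a)^[m] Ψe with hh
    obtain ⟨Qh, hQh⟩ := iter_prim_poly a Ψ m
    have hhc : ContDiff ℝ (⊤ : ℕ∞) h := by
      rw [hh, hΨe, hQh]
      have hA : AnalyticOnNhd ℝ (fun t => Qh.eval t) Set.univ := by
        simpa using (AnalyticOnNhd.eval_polynomial (𝕜 := ℝ) Qh)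
      exact hA.contDiff
    have hbd : ∀ i < m, iteratedDeriv i h a = 0 ∧ iteratedDeriv i h b = 0 := by
      intro i him
      have hiter0 := iteratedDeriv_iter_prim a hΨc i (m - i)
      rw [show i + (m - i) = m by omega] at hiter0
      have hiter : iteratedDeriv i h = (prim a)^[m - i] Ψe := by rw [hh]; exact hiter0
      obtain ⟨k, hk⟩ : ∃ k, m - i = k + 1 := ⟨m - i - 1, by omega⟩
      have hkm : k < m := by omega
      constructor
      · rw [hiter, hk, iter_prim_at_self]
      · rw [hiter, hk, iter_prim_cauchy a b hΨc k]
        have h0 := hΨ ⟨k, hkm⟩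
        have hrw : (fun s => ((b - s) ^ k / (k.factorial : ℝ)) * Ψ.eval s)
            = fun s => ((k.factorial : ℝ))⁻¹ * (e ⟨k, hkm⟩ s * Ψ.eval s) := by
          funext s; rw [he]; simp only []; ring
        rw [hrw, intervalIntegral.integral_const_mul, h0, mul_zero]
    have htop : iteratedDeriv m h = Ψe := by
      have h1 := iteratedDeriv_iter_prim a hΨc m 0
      rw [Nat.add_zero] at h1
      rw [hh, h1]
      rfl
    have hres := hint h hhc hbd
    rwa [htop] at hres
  -- Step B : the Gram matrix is surjective
  have hker : ∀ c : Fin m → ℝ, M.mulVec c = 0 → c = 0 := by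
    intro c hc
    set q : ℝ → ℝ := fun s => ∑ i : Fin m, c i * e i s with hq
    have hqcont : Continuous q := by
      rw [hq]; exact continuous_finset_sum _ fun i _ => continuous_const.mul (hecont i)
    have hek_q : ∀ k : Fin m, ∫ s in a..b, e k s * q s = 0 := by
      intro k
      have hrw : (fun s => e k s * q s) = fun s => ∑ i : Fin m, c i * (e k s * e i s) := by
        funext s; rw [hq]; simp only []; rw [Finset.mul_sum]
        exact Finset.sum_congr rfl fun i _ => by ring
      rw [hrw, intervalIntegral.integral_finset_sum]
      · calc (∑ i : Fin m, ∫ s in a..b, c i * (e k s * e i s))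
            = ∑ i : Fin m, (∫ s in a..b, e k s * e i s) * c i := by
              apply Finset.sum_congr rfl; intro i _
              rw [intervalIntegral.integral_const_mul]; ring
          _ = M.mulVec c k := (hMapp c k).symm
          _ = 0 := by rw [hc]; rfl
      · intro i _
        exact (continuous_const.mul ((hecont k).mul (hecont i))).intervalIntegrable _ _
    have hqq : ∫ s in a..b, q s * q s = 0 := by
      have hrw : (fun s => q s * q s) = fun s => ∑ k : Fin m, c k * (e k s * q s) := by
        funext s
        have hqs : q s = ∑ k : Fin m, c k * e k s := by rw [hq]
        nth_rewrite 1 [hqs]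
        rw [Finset.sum_mul]
        exact Finset.sum_congr rfl fun k _ => by ring
      rw [hrw, intervalIntegral.integral_finset_sum]
      · calc (∑ k : Fin m, ∫ s in a..b, c k * (e k s * q s))
            = ∑ k : Fin m, c k * ∫ s in a..b, e k s * q s := by
              exact Finset.sum_congr rfl fun k _ => intervalIntegral.integral_const_mul _ _
          _ = 0 := by
              rw [Finset.sum_congr rfl fun k _ => by rw [hek_q k, mul_zero]]
              exact Finset.sum_const_zero
      · intro k _
        exact (continuous_const.mul ((hecont k).mul hqcont)).intervalIntegrable _ _
    have hq0 := key_zero hab (hqcont.mul hqcont).continuousOn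
      (fun t _ => mul_self_nonneg (q t)) hqq
    apply coeffs_eq_zero b c (Set.Icc_infinite hab)
    intro s hs
    have h1 := mul_self_eq_zero.mp (hq0 s hs)
    rw [hq] at h1
    simpa [he] using h1
  have hMsurj : Function.Surjective (M.mulVecLin) := by
    rw [← LinearMap.injective_iff_surjective]
    intro x y hxy
    have h0 : M.mulVecLin (x - y) = 0 := by rw [map_sub, hxy, sub_self]
    have h1 := hker (x - y) (by simpa [Matrix.mulVecLin_apply] using h0)
    exact sub_eq_zero.mp h1
  -- Step C : the candidate polynomial density p
  set d : Fin m → ℝ := fun i => ∫ s in a..b, f s * e i s with hd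
  obtain ⟨u, hu⟩ := hMsurj d
  set p : ℝ → ℝ := fun s => ∑ k : Fin m, u k * e k s with hp
  have hpcont : Continuous p := by
    rw [hp]; exact continuous_finset_sum _ fun k _ => continuous_const.mul (hecont k)
  have stepC : ∀ Ψ : Polynomial ℝ,
      (∫ s in a..b, f s * Ψ.eval s) = ∫ s in a..b, p s * Ψ.eval s := by
    intro Ψ
    set w : Fin m → ℝ := fun k => ∫ s in a..b, e k s * Ψ.eval s with hw
    obtain ⟨c, hc⟩ := hMsurj w
    rw [Matrix.mulVecLin_apply] at hc
    set Qc : Polynomial ℝ :=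
      ∑ i : Fin m, Polynomial.C (c i) * (Polynomial.C b - Polynomial.X) ^ (i : ℕ) with hQc
    have hQceval : ∀ s, Qc.eval s = ∑ i : Fin m, c i * e i s := by
      intro s; rw [hQc]; simp [he, Polynomial.eval_finset_sum]
    have hQccont : Continuous (fun s => ∑ i : Fin m, c i * e i s) :=
      continuous_finset_sum _ fun i _ => continuous_const.mul (hecont i)
    have hadm : ∀ k : Fin m, ∫ s in a..b, e k s * (Ψ - Qc).eval s = 0 := by
      intro k
      have hrw : (fun s => e k s * (Ψ - Qc).eval s)
          = fun s => e k s * Ψ.eval s - ∑ i : Fin m, c i * (e k s * e i s) := by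
        funext s
        rw [Polynomial.eval_sub, mul_sub, hQceval, Finset.mul_sum]
        congr 1
        exact Finset.sum_congr rfl fun i _ => by ring
      rw [hrw, intervalIntegral.integral_sub, intervalIntegral.integral_finset_sum]
      · have h2 : (∑ i : Fin m, ∫ s in a..b, c i * (e k s * e i s))
            = M.mulVec c k := by
          rw [hMapp c k]
          apply Finset.sum_congr rfl; intro i _
          rw [intervalIntegral.integral_const_mul]; ring
        rw [h2, hc]
        simp [hw]
      · intro i _
        exact (continuous_const.mul ((hecont k).mul (hecont i))).intervalIntegrable _ _
      · exact ((hecont k).mul Ψ.continuous).intervalIntegrable _ _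
      · exact (continuous_finset_sum _ fun i _ =>
          continuous_const.mul ((hecont k).mul (hecont i))).intervalIntegrable _ _
    have hfΨQc := stepA (Ψ - Qc) hadm
    have hsplit : (∫ s in a..b, f s * (Ψ - Qc).eval s)
        = (∫ s in a..b, f s * Ψ.eval s) - ∫ s in a..b, f s * Qc.eval s := by
      rw [← intervalIntegral.integral_sub (hfint _ Ψ.continuous) (hfint _ Qc.continuous)]
      apply intervalIntegral.integral_congr
      intro x _
      simp only [Polynomial.eval_sub]
      ring
    have hfQc : (∫ s in a..b, f s * Qc.eval s) = ∑ i : Fin m, c i * d i := by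
      have hrw : (fun s => f s * Qc.eval s) = fun s => ∑ i : Fin m, c i * (f s * e i s) := by
        funext s; rw [hQceval, Finset.mul_sum]
        exact Finset.sum_congr rfl fun i _ => by ring
      rw [hrw, intervalIntegral.integral_finset_sum]
      · exact Finset.sum_congr rfl fun i _ => by
          rw [intervalIntegral.integral_const_mul]
      · intro i _
        have : (fun s => c i * (f s * e i s)) = fun s => f s * (c i * e i s) := by
          funext s; ring
        rw [this]
        exact hfint _ (continuous_const.mul (hecont i))
    have hfΨ : (∫ s in a..b, f s * Ψ.eval s) = ∑ i : Fin m, c i * d i := by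
      rw [hsplit] at hfΨQc
      rw [← hfQc]; linarith
    have hpΨ : (∫ s in a..b, p s * Ψ.eval s) = ∑ k : Fin m, u k * w k := by
      have hrw : (fun s => p s * Ψ.eval s) = fun s => ∑ k : Fin m, u k * (e k s * Ψ.eval s) := by
        funext s; rw [hp]; simp only []; rw [Finset.sum_mul]
        exact Finset.sum_congr rfl fun k _ => by ring
      rw [hrw, intervalIntegral.integral_finset_sum]
      · exact Finset.sum_congr rfl fun k _ => by
          rw [intervalIntegral.integral_const_mul]
      · intro k _
        exact (continuous_const.mul ((hecont k).mul Ψ.continuous)).intervalIntegrable _ _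
    rw [hfΨ, hpΨ]
    -- symmetry of M
    have hMsymm : ∀ k i : Fin m, (∫ s in a..b, e k s * e i s) = ∫ s in a..b, e i s * e k s := by
      intro k i
      apply intervalIntegral.integral_congr
      intro x _; ring
    rw [Matrix.mulVecLin_apply] at hu
    calc (∑ i : Fin m, c i * d i)
        = ∑ i : Fin m, c i * (M.mulVec u i) := by rw [hu]
      _ = ∑ i : Fin m, ∑ k : Fin m, c i * ((∫ s in a..b, e i s * e k s) * u k) := by
          apply Finset.sum_congr rfl; intro i _
          rw [hMapp u i, Finset.mul_sum]
      _ = ∑ k : Fin m, ∑ i : Fin m, u k * ((∫ s in a..b, e k s * e i s) * c i) := by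
          rw [Finset.sum_comm]
          apply Finset.sum_congr rfl; intro k _
          apply Finset.sum_congr rfl; intro i _
          rw [hMsymm k i]; ring
      _ = ∑ k : Fin m, u k * (M.mulVec c k) := by
          apply Finset.sum_congr rfl; intro k _
          rw [hMapp c k, Finset.mul_sum]
      _ = ∑ k : Fin m, u k * w k := by rw [hc]
  -- Step D : Weierstrass
  set g : ℝ → ℝ := fun s => f s - p s with hgdef
  have hgcont : ContinuousOn g (Set.Icc a b) := hf.sub hpcont.continuousOn
  have hgorth : ∀ Ψ : Polynomial ℝ, ∫ s in a..b, g s * Ψ.eval s = 0 := by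
    intro Ψ
    have h1 : (fun s => g s * Ψ.eval s) = fun s => f s * Ψ.eval s - p s * Ψ.eval s := by
      funext s; rw [hgdef]; ring
    rw [h1, intervalIntegral.integral_sub (hfint _ Ψ.continuous)
      (show IntervalIntegrable (fun s => p s * Ψ.eval s) MeasureTheory.volume a b from
        (hpcont.mul Ψ.continuous).intervalIntegrable _ _), stepC, sub_self]
  obtain ⟨C, hC⟩ := (isCompact_Icc (a := a) (b := b)).exists_bound_of_continuousOn hgcont
  have hC0 : 0 ≤ C := le_trans (norm_nonneg _) (hC a (Set.left_mem_Icc.mpr hab'))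
  have hba : (0:ℝ) < |b - a| := abs_pos.mpr (sub_ne_zero.mpr hab.ne')
  have hgg : ∫ s in a..b, g s * g s = 0 := by
    by_contra hne
    have hIpos : 0 < |∫ s in a..b, g s * g s| := abs_pos.mpr hne
    have hbound : ∀ ε > 0, |∫ s in a..b, g s * g s| ≤ (C * ε) * |b - a| := by
      intro ε hε
      obtain ⟨Ψ, hΨ⟩ := exists_polynomial_near_of_continuousOn a b g hgcont ε hε
      have hint1 : IntervalIntegrable (fun s => g s * (g s - Ψ.eval s))
          MeasureTheory.volume a b := by
        apply ContinuousOn.intervalIntegrable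
        rw [huIcc]
        exact hgcont.mul (hgcont.sub Ψ.continuous.continuousOn)
      have hint2 : IntervalIntegrable (fun s => g s * Ψ.eval s) MeasureTheory.volume a b := by
        apply ContinuousOn.intervalIntegrable
        rw [huIcc]
        exact hgcont.mul Ψ.continuous.continuousOn
      have hsplit : (∫ s in a..b, g s * g s)
          = (∫ s in a..b, g s * (g s - Ψ.eval s)) + ∫ s in a..b, g s * Ψ.eval s := by
        rw [← intervalIntegral.integral_add hint1 hint2]
        apply intervalIntegral.integral_congr
        intro x _; ring
      rw [hsplit, hgorth, add_zero, ← Real.norm_eq_abs]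
      apply intervalIntegral.norm_integral_le_of_norm_le_const
      intro x hx
      have hxIcc : x ∈ Set.Icc a b := by
        rw [Set.uIoc_of_le hab'] at hx
        exact ⟨hx.1.le, hx.2⟩
      calc ‖g x * (g x - Ψ.eval x)‖ = |g x| * |g x - Ψ.eval x| := abs_mul _ _
        _ ≤ C * ε := by
            apply mul_le_mul (hC x hxIcc) _ (abs_nonneg _) hC0
            rw [abs_sub_comm]
            exact (hΨ x hxIcc).le
    set I := |∫ s in a..b, g s * g s| with hI
    have hεpos : 0 < I / (2 * (C + 1) * |b - a|) := by positivity
    have h1 := hbound _ hεpos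
    have h2 : C * (I / (2 * (C + 1) * |b - a|)) * |b - a| ≤ I / 2 := by
      have hkey : C * (I / (2 * (C + 1) * |b - a|)) * |b - a|
          = I * (C * |b - a|) / (2 * (C + 1) * |b - a|) := by ring
      rw [hkey, div_le_div_iff₀ (by positivity) (by norm_num : (0:ℝ) < 2)]
      nlinarith [hIpos.le, hba.le, hC0]
    linarith
  have hgz := key_zero hab (hgcont.mul hgcont) (fun t _ => mul_self_nonneg (g t)) hgg
  set P : Polynomial ℝ :=
    ∑ k : Fin m, Polynomial.C (u k) * (Polynomial.C b - Polynomial.X) ^ (k : ℕ) with hP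
  have hPeval : ∀ s, P.eval s = p s := by
    intro s; rw [hP, hp]; simp [he, Polynomial.eval_finset_sum]
  refine ⟨P, ?_, ?_⟩
  · rw [hP]
    apply lt_of_le_of_lt (Polynomial.degree_sum_le _ _)
    rw [Finset.sup_lt_iff (by exact_mod_cast WithBot.bot_lt_coe m)]
    intro k _
    have hdeg : (Polynomial.C b - Polynomial.X : Polynomial ℝ).degree = 1 := by
      rw [show (Polynomial.C b - Polynomial.X : Polynomial ℝ)
        = -(Polynomial.X - Polynomial.C b) by ring, Polynomial.degree_neg,
        Polynomial.degree_X_sub_C]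
    have h2 : ((Polynomial.C b - Polynomial.X : Polynomial ℝ) ^ (k : ℕ)).degree
        ≤ ((k : ℕ) : WithBot ℕ) := by
      refine le_trans (Polynomial.degree_pow_le _ _) ?_
      rw [hdeg]
      simp
    calc (Polynomial.C (u k) * (Polynomial.C b - Polynomial.X) ^ (k : ℕ)).degree
        ≤ (Polynomial.C (u k)).degree
          + ((Polynomial.C b - Polynomial.X : Polynomial ℝ) ^ (k : ℕ)).degree :=
          Polynomial.degree_mul_le _ _
      _ ≤ 0 + ((k : ℕ) : WithBot ℕ) := add_le_add Polynomial.degree_C_le h2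
      _ = ((k : ℕ) : WithBot ℕ) := zero_add _
      _ < (m : WithBot ℕ) := by exact_mod_cast k.isLt
  · intro t ht
    have h0 : g t = 0 := mul_self_eq_zero.mp (hgz t ht)
    rw [hgdef] at h0
    rw [hPeval]
    simp only [] at h0
    linarith
end

section
/- Energy-type conservation identity for higher-order Lagrangians (classical smooth version): Let L : ℝ × ℝ^{m+1} → ℝ be smooth, q : [t₁,t₂] → ℝ smooth, and define φ^j(q)(t) := Σ_{i=0}^{m−j} (−1)^i (d^i/dt^i)(∂_{i+j+2}L)(t, q(t), q'(t), …, q^{(m)}(t)) for j = 0,…,m, where ∂_k denotes the partial derivative with respect to the k-th argument. If q satisfies the m-th order Euler–Lagrange equation Σ_{i=0}^m (−1)^i (d^i/dt^i)(∂_{i+2}L)(t,q(t),…,q^{(m)}(t)) = 0 on [t₁,t₂], then d/dt [ L(t,q,…,q^{(m)}) − Σ_{j=1}^m φ^j(q)(t)·q^{(j)}(t) ] = ∂_1 L(t,q(t),…,q^{(m)}(t)) for all t ∈ [t₁,t₂]. In particular, if L does not depend explicitly on t, the quantity L − Σ_{j=1}^m φ^j(q)·q^{(j)} is constant along Euler–Lagrange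 extremals. -/
/-- The `m`-jet of a curve `q`: `(t, q(t), q'(t), …, q⁽ᵐ⁾(t))`, as a point of
`ℝ^{m+2}` (index `0` is `t`, index `i+1` is `q⁽ⁱ⁾(t)`). -/
noncomputable def jet (m : ℕ) (q : ℝ → ℝ) (t : ℝ) : Fin (m + 2) → ℝ :=
  fun j => Fin.cases t (fun i => iteratedDeriv i.1 q t) j

/-- Partial derivative of `L` with respect to its `k`-th argument (0-indexed:
`pd m L 0 = ∂L/∂t`, `pd m L (i+1) = ∂L/∂q⁽ⁱ⁾`). -/
noncomputable def pd (m : ℕ) (L : (Fin (m + 2) → ℝ) → ℝ) (k : ℕ)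
    (x : Fin (m + 2) → ℝ) : ℝ :=
  fderiv ℝ L x (Pi.single (Fin.ofNat (m + 2) k) 1)

/-- The quantities `φʲ(q)(t) = Σ_{i=0}^{m-j} (−1)ⁱ (dⁱ/dtⁱ) ∂_{q⁽ⁱ⁺ʲ⁾}L[q](t)`. -/
noncomputable def phi (m : ℕ) (L : (Fin (m + 2) → ℝ) → ℝ) (q : ℝ → ℝ) (j : ℕ) (t : ℝ) : ℝ :=
  ∑ i ∈ Finset.range (m - j + 1),
    (-1 : ℝ) ^ i * iteratedDeriv i (fun s => pd m L (i + j + 1) (jet m q s)) t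

private lemma itd_smooth {g : ℝ → ℝ} (hg : ContDiff ℝ (⊤ : ℕ∞) g) (i : ℕ) :
    ContDiff ℝ (⊤ : ℕ∞) (iteratedDeriv i g) := by
  rw [iteratedDeriv_eq_iterate]
  exact ContDiff.iterate_deriv i hg

private lemma hasDerivAt_itd {g : ℝ → ℝ} (hg : ContDiff ℝ (⊤ : ℕ∞) g) (i : ℕ) (t : ℝ) :
    HasDerivAt (iteratedDeriv i g) (iteratedDeriv (i + 1) g t) t := by
  rw [iteratedDeriv_succ]
  exact (((itd_smooth hg i).differentiable (by simp)) t).hasDerivAt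

private lemma jet_smooth {m : ℕ} {q : ℝ → ℝ} (hq : ContDiff ℝ (⊤ : ℕ∞) q) :
    ContDiff ℝ (⊤ : ℕ∞) (jet m q) := by
  rw [contDiff_pi]
  intro j
  induction j using Fin.cases with
  | zero => simpa [jet] using (contDiff_fun_id : ContDiff ℝ (⊤ : ℕ∞) (fun x : ℝ => x))
  | succ i => simpa [jet] using itd_smooth hq i.1

private lemma pd_smooth {m : ℕ} {L : (Fin (m + 2) → ℝ) → ℝ} (hL : ContDiff ℝ (⊤ : ℕ∞) L) (k : ℕ) :
    ContDiff ℝ (⊤ : ℕ∞) (pd m L k) :=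
  (hL.fderiv_right (by simp)).clm_apply contDiff_const

private lemma fderiv_expand {n : ℕ} (f : (Fin n → ℝ) →L[ℝ] ℝ) (v : Fin n → ℝ) :
    f v = ∑ k : Fin n, v k * f (Pi.single k 1) := by
  have hv : v = ∑ k : Fin n, v k • (Pi.single k 1 : Fin n → ℝ) := by
    funext j
    simp [Finset.sum_apply, Pi.single_apply, mul_ite]
  conv_lhs => rw [hv]
  simp [smul_eq_mul]

private lemma hasDerivAt_jet {m : ℕ} {q : ℝ → ℝ} (hq : ContDiff ℝ (⊤ : ℕ∞) q) (t : ℝ) :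
    HasDerivAt (jet m q)
      (fun j => Fin.cases 1 (fun i : Fin (m + 1) => iteratedDeriv (i.1 + 1) q t) j) t := by
  rw [hasDerivAt_pi]
  intro j
  induction j using Fin.cases with
  | zero => simpa [jet] using hasDerivAt_id' (x := t)
  | succ i => simpa [jet] using hasDerivAt_itd hq i.1 t

private lemma hasDerivAt_L_jet {m : ℕ} {L : (Fin (m + 2) → ℝ) → ℝ} {q : ℝ → ℝ}
    (hL : ContDiff ℝ (⊤ : ℕ∞) L) (hq : ContDiff ℝ (⊤ : ℕ∞) q) (t : ℝ) :
    HasDerivAt (fun s => L (jet m q s))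
      (pd m L 0 (jet m q t)
        + ∑ i ∈ Finset.range (m + 1),
            pd m L (i + 1) (jet m q t) * iteratedDeriv (i + 1) q t) t := by
  have hF : HasFDerivAt L (fderiv ℝ L (jet m q t)) (jet m q t) :=
    ((hL.differentiable (by simp)) (jet m q t)).hasFDerivAt
  have h := hF.comp_hasDerivAt t (hasDerivAt_jet hq t)
  have key : ∀ i : Fin (m + 1), Fin.ofNat (m + 2) (i.1 + 1) = i.succ := by
    intro i
    apply Fin.ext
    rw [Fin.val_ofNat, Nat.mod_eq_of_lt (by omega)]
    simp
  have hw : (fderiv ℝ L (jet m q t))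
        (fun j => Fin.cases 1 (fun i : Fin (m + 1) => iteratedDeriv (i.1 + 1) q t) j)
      = pd m L 0 (jet m q t)
        + ∑ i ∈ Finset.range (m + 1),
            pd m L (i + 1) (jet m q t) * iteratedDeriv (i + 1) q t := by
    rw [fderiv_expand, Fin.sum_univ_succ]
    simp only [Fin.cases_zero, Fin.cases_succ, one_mul]
    have h0 : (fderiv ℝ L (jet m q t)) (Pi.single 0 1) = pd m L 0 (jet m q t) := by
      unfold pd; norm_num
    rw [h0, ← Fin.sum_univ_eq_sum_range
      (fun i => pd m L (i + 1) (jet m q t) * iteratedDeriv (i + 1) q t) (m + 1)]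
    exact congrArg (pd m L 0 (jet m q t) + ·)
      (Finset.sum_congr rfl fun i _ => by rw [mul_comm]; unfold pd; rw [key i])
  rw [← hw]
  exact h

private lemma hasDerivAt_phi {m : ℕ} {L : (Fin (m + 2) → ℝ) → ℝ} {q : ℝ → ℝ}
    (hL : ContDiff ℝ (⊤ : ℕ∞) L) (hq : ContDiff ℝ (⊤ : ℕ∞) q) (j : ℕ) (hj1 : 1 ≤ j) (hjm : j ≤ m)
    (t : ℝ) :
    HasDerivAt (phi m L q j) (pd m L j (jet m q t) - phi m L q (j - 1) t) t := by
  have hsm : ∀ k : ℕ, ContDiff ℝ (⊤ : ℕ∞) (fun s => pd m L k (jet m q s)) :=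
    fun k => (pd_smooth hL k).comp (jet_smooth hq)
  have h1 : HasDerivAt (phi m L q j)
      (∑ i ∈ Finset.range (m - j + 1),
        (-1 : ℝ) ^ i * iteratedDeriv (i + 1) (fun s => pd m L (i + j + 1) (jet m q s)) t) t := by
    unfold phi
    exact HasDerivAt.fun_sum fun i _ => (hasDerivAt_itd (hsm _) i t).const_mul _
  convert h1 using 1
  unfold phi
  have hrw : m - (j - 1) + 1 = (m - j + 1) + 1 := by omega
  rw [hrw, Finset.sum_range_succ']
  have h0 : (-1 : ℝ) ^ 0 * iteratedDeriv 0 (fun s => pd m L (0 + (j - 1) + 1) (jet m q s)) t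
      = pd m L j (jet m q t) := by
    have hj : 0 + (j - 1) + 1 = j := by omega
    rw [hj]; simp
  rw [h0]
  have hidx : ∀ i : ℕ, i + 1 + (j - 1) + 1 = i + j + 1 := fun i => by omega
  simp only [hidx]
  have habs : ∀ a b : ℝ, a - (b + a) = -b := fun a b => by ring
  rw [habs, ← Finset.sum_neg_distrib]
  exact Finset.sum_congr rfl fun i _ => by ring

private lemma phi_smooth {m : ℕ} {L : (Fin (m + 2) → ℝ) → ℝ} {q : ℝ → ℝ}
    (hL : ContDiff ℝ (⊤ : ℕ∞) L) (hq : ContDiff ℝ (⊤ : ℕ∞) q) (j : ℕ) :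
    ContDiff ℝ (⊤ : ℕ∞) (phi m L q j) := by
  unfold phi
  exact ContDiff.sum fun i _ =>
    contDiff_const.mul (itd_smooth ((pd_smooth hL _).comp (jet_smooth hq)) i)

private lemma phi_m {m : ℕ} {L : (Fin (m + 2) → ℝ) → ℝ} {q : ℝ → ℝ} (t : ℝ) :
    phi m L q m t = pd m L (m + 1) (jet m q t) := by
  simp [phi, Nat.sub_self]

/-- energy-type conservation identity for higher-order Lagrangians.
Along solutions of the `m`-th order Euler–Lagrange equation,
`d/dt [L[q] − Σ_{j=1}^m φʲ(q)·q⁽ʲ⁾] = ∂₁L[q]`; in particular, if `L` is autonomous the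
bracketed quantity is constant. -/
theorem stmt_19 (m : ℕ) (hm : 0 < m) (L : (Fin (m + 2) → ℝ) → ℝ) (hL : ContDiff ℝ (⊤ : ℕ∞) L)
    (q : ℝ → ℝ) (hq : ContDiff ℝ (⊤ : ℕ∞) q) (t₁ t₂ : ℝ) (ht : t₁ < t₂)
    (hEL : ∀ t ∈ Set.Icc t₁ t₂,
      ∑ i ∈ Finset.range (m + 1),
        (-1 : ℝ) ^ i * iteratedDeriv i (fun s => pd m L (i + 1) (jet m q s)) t = 0) :
    (∀ t ∈ Set.Icc t₁ t₂,
      HasDerivAt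
        (fun s => L (jet m q s) - ∑ j ∈ Finset.Icc 1 m, phi m L q j s * iteratedDeriv j q s)
        (pd m L 0 (jet m q t)) t) ∧
    ((∀ x : Fin (m + 2) → ℝ, pd m L 0 x = 0) →
      ∀ t ∈ Set.Icc t₁ t₂, ∀ t' ∈ Set.Icc t₁ t₂,
        L (jet m q t) - ∑ j ∈ Finset.Icc 1 m, phi m L q j t * iteratedDeriv j q t =
        L (jet m q t') - ∑ j ∈ Finset.Icc 1 m, phi m L q j t' * iteratedDeriv j q t') := by
  have hq' : ContDiff ℝ (⊤ : ℕ∞) q := hq.of_le (by simp)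
  have part1 : ∀ t ∈ Set.Icc t₁ t₂,
      HasDerivAt
        (fun s => L (jet m q s) - ∑ j ∈ Finset.Icc 1 m, phi m L q j s * iteratedDeriv j q s)
        (pd m L 0 (jet m q t)) t := by
    intro t htI
    have hphi0 : phi m L q 0 t = 0 := by
      have := hEL t htI
      simpa [phi] using this
    have hsum : HasDerivAt
        (fun s => ∑ j ∈ Finset.Icc 1 m, phi m L q j s * iteratedDeriv j q s)
        (∑ j ∈ Finset.Icc 1 m,
          ((pd m L j (jet m q t) - phi m L q (j - 1) t) * iteratedDeriv j q t
            + phi m L q j t * iteratedDeriv (j + 1) q t)) t := by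
      refine HasDerivAt.fun_sum fun j hj => ?_
      obtain ⟨h1, h2⟩ := Finset.mem_Icc.mp hj
      exact (hasDerivAt_phi hL hq' j h1 h2 t).mul (hasDerivAt_itd hq' j t)
    have hB : (∑ j ∈ Finset.Icc 1 m,
          ((pd m L j (jet m q t) - phi m L q (j - 1) t) * iteratedDeriv j q t
            + phi m L q j t * iteratedDeriv (j + 1) q t))
        = ∑ i ∈ Finset.range (m + 1),
            pd m L (i + 1) (jet m q t) * iteratedDeriv (i + 1) q t := by
      rw [← Finset.Ico_add_one_right_eq_Icc, Finset.sum_Ico_eq_sum_range]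
      rw [Nat.add_sub_cancel]
      have step : ∀ i : ℕ,
          (pd m L (1 + i) (jet m q t) - phi m L q (1 + i - 1) t) * iteratedDeriv (1 + i) q t
            + phi m L q (1 + i) t * iteratedDeriv (1 + i + 1) q t
          = pd m L (i + 1) (jet m q t) * iteratedDeriv (i + 1) q t
            + ((phi m L q (i + 1) t * iteratedDeriv (i + 1 + 1) q t)
              - (phi m L q i t * iteratedDeriv (i + 1) q t)) := by
        intro i
        have e1 : 1 + i = i + 1 := by omega
        rw [e1, Nat.add_sub_cancel]
        ring
      rw [Finset.sum_congr rfl fun i _ => step i, Finset.sum_add_distrib,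
        Finset.sum_range_sub (fun j => phi m L q j t * iteratedDeriv (j + 1) q t),
        Finset.sum_range_succ, phi_m, hphi0]
      ring
    have hmain := (hasDerivAt_L_jet hL hq' t).sub hsum
    rw [hB] at hmain
    simp only [add_sub_cancel_right] at hmain
    exact hmain
  refine ⟨part1, fun hzero t htI t' htI' => ?_⟩
  set f : ℝ → ℝ :=
    fun s => L (jet m q s) - ∑ j ∈ Finset.Icc 1 m, phi m L q j s * iteratedDeriv j q s with hf
  have hcont : ContinuousOn f (Set.Icc t₁ t₂) := by
    apply Continuous.continuousOn
    exact ((hL.continuous).comp (jet_smooth hq').continuous).sub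
      (continuous_finset_sum _ fun j _ =>
        ((phi_smooth hL hq' j).continuous).mul (itd_smooth hq' j).continuous)
  have hderiv : ∀ x ∈ Set.Ico t₁ t₂, HasDerivWithinAt f 0 (Set.Ici x) x := by
    intro x hx
    have := part1 x (Set.mem_Icc_of_Ico hx)
    rw [hzero] at this
    exact this.hasDerivWithinAt
  have hc := constant_of_has_deriv_right_zero hcont hderiv
  show f t = f t'
  rw [hc t htI, hc t' htI']
end
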